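/- Let y* ∈ [2,3], ρ₀ > 1/3, T > 0, and let (ρ, ω) be a left solution with data ρ₀ on [0, T). If z₀ ∈ (0, T) satisfies ρ(z₀) > 1/(y*·z₀), then ρ(z) > 1/(y*·z) for all z ∈ [z₀, T). -/

import Mathlib

/-- The rescaled self-similar isothermal Euler–Poisson system with parameter `y = y*`,
at the point `z`. -/
def EPSys (y : ℝ) (ρ ω : ℝ → ℝ) (z : ℝ) : Prop :=
  deriv ρ z =
    -(2 * y ^ 2 * z * ω z * ρ z * (ρ z - ω z)) / (1 - y ^ 2 * z ^ 2 * (ω z) ^ 2) ∧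
  deriv ω z =
    (1 - 3 * ω z) / z +
      2 * y ^ 2 * z * (ω z) ^ 2 * (ρ z - ω z) / (1 - y ^ 2 * z ^ 2 * (ω z) ^ 2)

/-- A left solution with data `ρ₀` on `[0, T)`: continuous on `[0,T)`, real analytic
near the origin, with `ρ(0) = ρ₀`, `ω(0) = 1/3`, differentiable on `(0,T)` where it
solves the system and stays subsonic. -/
def LeftSol (y ρ₀ T : ℝ) (ρ ω : ℝ → ℝ) : Prop :=
  ContinuousOn ρ (Set.Ico 0 T) ∧ ContinuousOn ω (Set.Ico 0 T) ∧
  AnalyticAt ℝ ρ 0 ∧ AnalyticAt ℝ ω 0 ∧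
  ρ 0 = ρ₀ ∧ ω 0 = 1 / 3 ∧
  (∀ z ∈ Set.Ioo (0 : ℝ) T,
    DifferentiableAt ℝ ρ z ∧ DifferentiableAt ℝ ω z ∧ EPSys y ρ ω z) ∧
  (∀ z ∈ Set.Ioo (0 : ℝ) T, 0 < 1 - y ^ 2 * z ^ 2 * (ω z) ^ 2)

/-!
Along the gap `g z = ρ z - 1/(y z)`, the first equation of the system evaluated at a zero of `g`
gives `g' z = (1 - y z ω) / (y z² (1 + y z ω))`, which is positive because the solution
is subsonic, `(y z ω)² < 1`. So `g` can only cross zero upwards, and being positive at `z₀`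
it stays positive.
-/

open Set

theorem pos_of_hasDerivWithinAt_Iic_pos_of_eq_zero {g g' : ℝ → ℝ} {a b : ℝ}
    (hg : ContinuousOn g (Icc a b)) (hg' : ∀ x ∈ Ioc a b, HasDerivWithinAt g (g' x) (Iic x) x)
    (ha : 0 < g a) (hzero : ∀ x ∈ Ioc a b, g x = 0 → 0 < g' x) :
    ∀ ⦃x⦄, x ∈ Icc a b → 0 < g x := by
  intro x hx
  by_contra! hgx
  -- Run time backwards from `x`: `t ↦ g (-t)` starts `≤ 0` and can only touch `0` going down.
  have hrev : ∀ ⦃t⦄, t ∈ Icc (-x) (-a) → g (-t) ≤ 0 := by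
    refine image_le_of_deriv_right_lt_deriv_boundary (f' := fun t => -g' (-t)) (B' := fun _ => 0)
      ?_ ?_ (by simpa using hgx) (fun _ => hasDerivAt_const _ _) ?_
    · refine hg.comp continuousOn_neg fun t ht => ?_
      exact ⟨le_neg.mp ht.2, (neg_le.mp ht.1).trans hx.2⟩
    · intro t ht
      have hmem : -t ∈ Ioc a b := ⟨lt_neg.mp ht.2, (neg_le.mp ht.1).trans hx.2⟩
      have := (hg' (-t) hmem).comp t (hasDerivWithinAt_neg t (Ici t))
        fun s hs => neg_le_neg (mem_Ici.mp hs)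
      exact this.congr_deriv (by ring)
    · intro t ht hgt
      exact neg_neg_iff_pos.mpr (hzero (-t) ⟨lt_neg.mp ht.2, (neg_le.mp ht.1).trans hx.2⟩ hgt)
  have := hrev ⟨neg_le_neg hx.1, le_rfl⟩
  rw [neg_neg] at this
  linarith

theorem hasDerivAt_one_div_mul (y : ℝ) {z : ℝ} (hz : z ≠ 0) :
    HasDerivAt (fun z => 1 / (y * z)) (-(1 / (y * z ^ 2))) z := by
  simp_rw [one_div, mul_inv]
  exact ((hasDerivAt_inv hz).const_mul y⁻¹).congr_deriv (by ring)

theorem epsys_rhs_add_threshold_slope_pos {y z w : ℝ} (hy : 0 < y) (hz : 0 < z)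
    (hsub : 0 < 1 - y ^ 2 * z ^ 2 * w ^ 2) :
    0 < -(2 * y ^ 2 * z * w * (1 / (y * z)) * (1 / (y * z) - w)) / (1 - y ^ 2 * z ^ 2 * w ^ 2)
      + 1 / (y * z ^ 2) := by
  have hminus : 0 < 1 - y * z * w := by nlinarith [sq_nonneg (1 + y * z * w)]
  have hplus : 0 < 1 + y * z * w := by nlinarith [sq_nonneg (1 - y * z * w)]
  have hfactor : 1 - y ^ 2 * z ^ 2 * w ^ 2 = (1 - y * z * w) * (1 + y * z * w) := by ring
  have hclosed : -(2 * y ^ 2 * z * w * (1 / (y * z)) * (1 / (y * z) - w)) /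
        (1 - y ^ 2 * z ^ 2 * w ^ 2) + 1 / (y * z ^ 2)
      = (1 - y * z * w) / (y * z ^ 2 * (1 + y * z * w)) := by
    rw [hfactor]
    field_simp
    ring
  rw [hclosed]
  positivity

theorem left_solution_threshold_invariance_general
    (y ρ₀ T : ℝ) (hy : y ∈ Set.Icc (2 : ℝ) 3)
    (ρ ω : ℝ → ℝ) (h : LeftSol y ρ₀ T ρ ω)
    (z₀ : ℝ) (hz₀ : z₀ ∈ Set.Ioo (0 : ℝ) T)
    (hthr : 1 / (y * z₀) < ρ z₀) :
    ∀ z ∈ Set.Ico z₀ T, 1 / (y * z) < ρ z := by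
  obtain ⟨hρc, -, -, -, -, -, hsys, hsub⟩ := h
  have hy0 : 0 < y := by linarith [hy.1]
  intro z hz
  have hpos : ∀ x ∈ Icc z₀ z, 0 < x := fun x hx => hz₀.1.trans_le hx.1
  have hIoo : ∀ x ∈ Ioc z₀ z, x ∈ Ioo 0 T := fun x hx =>
    ⟨hz₀.1.trans hx.1, hx.2.trans_lt hz.2⟩
  have hcont : ContinuousOn (fun x => ρ x - 1 / (y * x)) (Icc z₀ z) :=
    (hρc.mono fun x hx => ⟨(hpos x hx).le, hx.2.trans_lt hz.2⟩).sub <|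
      continuousOn_const.div (continuousOn_const.mul continuousOn_id)
        fun x hx => (mul_pos hy0 (hpos x hx)).ne'
  have hderiv : ∀ x ∈ Ioc z₀ z, HasDerivWithinAt (fun x => ρ x - 1 / (y * x))
      (deriv ρ x + 1 / (y * x ^ 2)) (Iic x) x := by
    intro x hx
    have hx0 := hIoo x hx
    have hgap := (hsys x hx0).1.hasDerivAt.sub (hasDerivAt_one_div_mul y hx0.1.ne')
    exact (hgap.congr_deriv (sub_neg_eq_add _ _)).hasDerivWithinAt
  have hcross :
      ∀ x ∈ Ioc z₀ z, ρ x - 1 / (y * x) = 0 → 0 < deriv ρ x + 1 / (y * x ^ 2) := by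
    intro x hx hgx
    have hx0 := hIoo x hx
    rw [(hsys x hx0).2.2.1, sub_eq_zero.mp hgx]
    exact epsys_rhs_add_threshold_slope_pos hy0 hx0.1 (hsub x hx0)
  exact sub_pos.mp <| pos_of_hasDerivWithinAt_Iic_pos_of_eq_zero hcont hderiv
    (sub_pos.mpr hthr) hcross ⟨hz.1, le_rfl⟩

/-- Once `ρ` exceeds the threshold `1/(y*z)`, it stays above it. -/
theorem left_solution_threshold_invariance
    (y ρ₀ T : ℝ) (hy : y ∈ Set.Icc (2 : ℝ) 3) (hρ₀ : 1 / 3 < ρ₀) (hT : 0 < T)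
    (ρ ω : ℝ → ℝ) (h : LeftSol y ρ₀ T ρ ω)
    (z₀ : ℝ) (hz₀ : z₀ ∈ Set.Ioo (0 : ℝ) T)
    (hthr : 1 / (y * z₀) < ρ z₀) :
    ∀ z ∈ Set.Ico z₀ T, 1 / (y * z) < ρ z :=
  left_solution_threshold_invariance_general y ρ₀ T hy ρ ω h z₀ hz₀ hthr
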